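/- Let β ≥ 0 be real and h ∈ ℝ. Then the spectral radius of the operator L_{β,h} = e^{−βh}L↑_β + e^{βh}L↓_β acting on H^∞(Π) satisfies r(L_{β,h}) ≥ e^{|βh|}. -/

import Mathlib

/-! Gelfand's formula reduces the claim to `‖Lⁿ‖ ≥ e^{n|βh|}`. Both `L↑_β` and `L↓` preserve
functions that are real and nonnegative on the positive half-line, so for `x > 0` the value
`(Lⁿ 1)(x)` is real and at least the contribution of any single branch: `n` steps of `L↓` give
`e^{nβh}`, and `n` steps of `L↑_β` give `e^{-nβh} (1 + n x)^{-2β}`, which tends to `e^{-nβh}` as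
`x → 0⁺`. Since `‖1‖ = 1`, every such value bounds `‖Lⁿ‖` from below. -/

open Complex BoundedContinuousFunction
open scoped ENNReal

/-- The open right half-plane `Π = {z : ℂ | 0 < Re z}`. -/
def RHP : Set ℂ := {z : ℂ | 0 < z.re}

/-- Extension of a bounded continuous function on `Π` to `ℂ` (by zero off `Π`). -/
noncomputable def extFun (f : ↥RHP →ᵇ ℂ) : ℂ → ℂ :=
  fun z => if h : 0 < z.re then f ⟨z, h⟩ else 0

/-- `H^∞(Π)`: the space of bounded holomorphic functions on `Π`, realised as the
submodule of the Banach space of bounded continuous functions on `Π` (with the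
supremum norm) consisting of the holomorphic ones. -/
noncomputable def Hinf : Submodule ℂ (↥RHP →ᵇ ℂ) where
  carrier := {f | DifferentiableOn ℂ (extFun f) RHP}
  add_mem' := by
    intro f g hf hg
    refine (DifferentiableOn.add hf hg).congr (fun z hz => ?_)
    have hz' : 0 < z.re := hz
    simp only [extFun]
    simp only [Pi.add_apply, extFun, dif_pos hz']
    try rfl
  zero_mem' := by
    refine (differentiableOn_const 0).congr (fun z hz => ?_)
    have hz' : 0 < z.re := hz
    simp only [extFun]
    rw [dif_pos hz']
    rfl
  smul_mem' := by
    intro c f hf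
    refine (hf.const_smul c).congr (fun z hz => ?_)
    have hz' : 0 < z.re := hz
    simp only [extFun]
    simp only [Pi.smul_apply, extFun, dif_pos hz']
    try rfl

lemma mem_shift (z : ↥RHP) : (1 : ℂ) + z.1 ∈ RHP := by
  have hz := z.2
  simp only [RHP, Set.mem_setOf_eq, Complex.add_re, Complex.one_re] at *
  linarith

lemma mem_div (z : ↥RHP) : z.1 / (1 + z.1) ∈ RHP := by
  have hz := z.2
  simp only [RHP, Set.mem_setOf_eq] at hz ⊢
  have hw : (1 + z.1) ≠ 0 := by
    intro h
    have h2 : (1 + z.1).re = 0 := by rw [h]; simp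
    simp only [Complex.add_re, Complex.one_re] at h2
    linarith
  have hns : 0 < Complex.normSq (1 + z.1) := Complex.normSq_pos.mpr hw
  rw [Complex.div_re]
  have h1 : 0 < z.1.re * (1 + z.1).re := by
    simp only [Complex.add_re, Complex.one_re]
    nlinarith
  have h2 : 0 ≤ z.1.im * (1 + z.1).im := by
    simp only [Complex.add_im, Complex.one_im, zero_add]
    nlinarith [sq_nonneg z.1.im]
  have := div_pos h1 hns
  have := div_nonneg h2 hns.le
  linarith

/-- Pointwise characterisation of the transfer operator
`(L↑_β f)(z) = (1+z)^(-2β) f(z/(1+z))` on `H^∞(Π)` (principal branch power). -/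
def IsLup (β : ℂ) (T : ↥Hinf →L[ℂ] ↥Hinf) : Prop :=
  ∀ f : ↥Hinf, ∀ z : ↥RHP,
    (T f).1 z = (1 + z.1) ^ (-(2 * β)) * f.1 ⟨z.1 / (1 + z.1), mem_div z⟩

/-- Pointwise characterisation of the transfer operator `(L↓ f)(z) = f(1+z)` on `H^∞(Π)`. -/
def IsLdn (T : ↥Hinf →L[ℂ] ↥Hinf) : Prop :=
  ∀ f : ↥Hinf, ∀ z : ↥RHP, (T f).1 z = f.1 ⟨1 + z.1, mem_shift z⟩

theorem ofReal_le_spectralRadius_of_pow_le_norm_pow {A : Type*} [NormedRing A]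
    [NormedAlgebra ℂ A] [CompleteSpace A] {a : A} {c : ℝ} (hc : 0 ≤ c)
    (h : ∀ n : ℕ, c ^ n ≤ ‖a ^ n‖) : ENNReal.ofReal c ≤ spectralRadius ℂ a := by
  refine ge_of_tendsto (spectrum.pow_norm_pow_one_div_tendsto_nhds_spectralRadius a) ?_
  filter_upwards [Filter.eventually_ne_atTop 0] with n hn
  refine ENNReal.ofReal_le_ofReal ?_
  calc c = (c ^ n) ^ (1 / n : ℝ) := by rw [one_div, Real.pow_rpow_inv_natCast hc hn]
    _ ≤ ‖a ^ n‖ ^ (1 / n : ℝ) := Real.rpow_le_rpow (by positivity) (h n) (by positivity)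

lemma isOpen_RHP : IsOpen RHP := isOpen_lt continuous_const Complex.continuous_re

lemma ofReal_mem_RHP {x : ℝ} (hx : 0 < x) : (x : ℂ) ∈ RHP := by simpa [RHP]

instance : Nonempty RHP := ⟨⟨1, by simp [RHP]⟩⟩

lemma extFun_coe (f : RHP →ᵇ ℂ) (z : RHP) : extFun f z = f z := dif_pos z.2

lemma isClosed_Hinf : IsClosed (Hinf : Set (RHP →ᵇ ℂ)) := by
  refine IsSeqClosed.isClosed fun F f hF hlim => ?_
  have : TendstoUniformlyOn (fun n => extFun (F n)) (extFun f) Filter.atTop RHP := by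
    rw [tendstoUniformlyOn_iff_tendstoUniformly_comp_coe]
    simpa only [Function.comp_def, extFun_coe] using
      BoundedContinuousFunction.tendsto_iff_tendstoUniformly.mp hlim
  exact this.tendstoLocallyUniformlyOn.differentiableOn (.of_forall hF) isOpen_RHP

instance : CompleteSpace Hinf := isClosed_Hinf.completeSpace_coe

open scoped ComplexOrder

namespace Hinf

noncomputable def one : Hinf := ⟨const _ 1, (differentiableOn_const 1).congr fun _ hz => dif_pos hz⟩

lemma norm_one : ‖one‖ = 1 := (norm_const_eq (1 : ℂ)).trans NormOneClass.norm_one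

/-- Under `ComplexOrder`, `(φ x : ℂ) ≤ g x` also says that `g x` is real. -/
def IsMinorant (φ : ℝ → ℝ) (g : Hinf) : Prop :=
  ∀ x (hx : 0 < x), (φ x : ℂ) ≤ g.1 ⟨x, ofReal_mem_RHP hx⟩

lemma isMinorant_one : IsMinorant (fun _ => 1) one := fun _ _ => by simp [one]

namespace IsMinorant

variable {φ ψ : ℝ → ℝ} {g : Hinf}

lemma mono (hg : IsMinorant φ g) (hψ : ∀ x, 0 < x → ψ x ≤ φ x) : IsMinorant ψ g :=
  fun x hx => (Complex.real_le_real.mpr (hψ x hx)).trans (hg x hx)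

lemma le_norm (hg : IsMinorant φ g) {x : ℝ} (hx : 0 < x) : φ x ≤ ‖g‖ :=
  calc φ x ≤ (g.1 ⟨x, ofReal_mem_RHP hx⟩).re := by simpa using (Complex.le_def.mp (hg x hx)).1
    _ ≤ ‖g.1 ⟨x, ofReal_mem_RHP hx⟩‖ := Complex.re_le_norm _
    _ ≤ ‖g‖ := g.1.norm_coe_le_norm _

lemma le_opNorm {S : Hinf →L[ℂ] Hinf} (hS : IsMinorant φ (S one)) {x : ℝ} (hx : 0 < x) :
    φ x ≤ ‖S‖ :=
  calc φ x ≤ ‖S one‖ := hS.le_norm hx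
    _ ≤ ‖S‖ * ‖one‖ := S.le_opNorm one
    _ = ‖S‖ := by rw [norm_one, mul_one]

end IsMinorant

end Hinf

open Hinf

section TransferOperator

variable {β a b : ℝ} {Lup Ldn : Hinf →L[ℂ] Hinf}

lemma transfer_apply_ofReal (hup : IsLup β Lup) (hdn : IsLdn Ldn) (g : Hinf) {x : ℝ}
    (hx : 0 < x) :
    (((a : ℂ) • Lup + (b : ℂ) • Ldn) g).1 ⟨x, ofReal_mem_RHP hx⟩ =
      a * (((1 + x) ^ (-(2 * β)) : ℝ) * g.1 ⟨(x / (1 + x) : ℝ), ofReal_mem_RHP (by positivity)⟩)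
        + b * g.1 ⟨(1 + x : ℝ), ofReal_mem_RHP (by positivity)⟩ := by
  have hdiv : (⟨x / (1 + x), mem_div ⟨x, ofReal_mem_RHP hx⟩⟩ : RHP) =
      ⟨(x / (1 + x) : ℝ), ofReal_mem_RHP (by positivity)⟩ := by
    ext; push_cast; rfl
  have hshift : (⟨1 + x, mem_shift ⟨x, ofReal_mem_RHP hx⟩⟩ : RHP) =
      ⟨(1 + x : ℝ), ofReal_mem_RHP (by positivity)⟩ := by
    ext; push_cast; rfl
  have hpow : (1 + (x : ℂ)) ^ (-(2 * (β : ℂ))) = ((1 + x) ^ (-(2 * β)) : ℝ) := by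
    rw [Complex.ofReal_cpow (by positivity)]; push_cast; rfl
  change a * (Lup g).1 _ + b * (Ldn g).1 _ = _
  rw [hup, hdn]
  simp only [hdiv, hshift, hpow]

lemma Hinf.IsMinorant.transfer (hup : IsLup β Lup) (hdn : IsLdn Ldn) (ha : 0 ≤ a) (hb : 0 ≤ b)
    {φ : ℝ → ℝ} {g : Hinf} (hg : IsMinorant φ g) (hφ : ∀ x, 0 < x → 0 ≤ φ x) :
    IsMinorant (fun x => a * ((1 + x) ^ (-(2 * β)) * φ (x / (1 + x))) + b * φ (1 + x))
      (((a : ℂ) • Lup + (b : ℂ) • Ldn) g) := by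
  intro x hx
  have hx' : 0 < 1 + x := by positivity
  have hup_val := hg _ (div_pos hx hx')
  have hdn_val := hg _ hx'
  have hup_nonneg := (Complex.zero_le_real.mpr (hφ _ (div_pos hx hx'))).trans hup_val
  rw [transfer_apply_ofReal hup hdn g hx, Complex.ofReal_add, Complex.ofReal_mul,
    Complex.ofReal_mul, Complex.ofReal_mul]
  gcongr

lemma isMinorant_transfer_pow_one_const (hup : IsLup β Lup) (hdn : IsLdn Ldn) (ha : 0 ≤ a)
    (hb : 0 ≤ b) (n : ℕ) :
    IsMinorant (fun _ => b ^ n) ((((a : ℂ) • Lup + (b : ℂ) • Ldn) ^ n) one) := by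
  induction n with
  | zero => simpa using isMinorant_one
  | succ n ih =>
    rw [pow_succ' (_ : Hinf →L[ℂ] Hinf), mul_apply_eq_comp]
    refine (ih.transfer hup hdn ha hb fun _ _ => by positivity).mono fun x hx => ?_
    have : 0 ≤ a * ((1 + x) ^ (-(2 * β)) * b ^ n) := by positivity
    rw [pow_succ']
    linarith

lemma isMinorant_transfer_pow_one_rpow (hup : IsLup β Lup) (hdn : IsLdn Ldn) (ha : 0 ≤ a)
    (hb : 0 ≤ b) (n : ℕ) :
    IsMinorant (fun x => a ^ n * (1 + n * x) ^ (-(2 * β)))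
      ((((a : ℂ) • Lup + (b : ℂ) • Ldn) ^ n) one) := by
  induction n with
  | zero => simpa using isMinorant_one
  | succ n ih =>
    rw [pow_succ' (_ : Hinf →L[ℂ] Hinf), mul_apply_eq_comp]
    refine (ih.transfer hup hdn ha hb fun _ _ => by positivity).mono fun x hx => ?_
    have hsplit : (1 + (n + 1 : ℕ) * x) ^ (-(2 * β)) =
        (1 + x) ^ (-(2 * β)) * (1 + n * (x / (1 + x))) ^ (-(2 * β)) := by
      rw [← Real.mul_rpow (by positivity) (by positivity)]
      congr 1
      field_simp
      push_cast
      ring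
    have : 0 ≤ b * (a ^ n * (1 + n * (1 + x)) ^ (-(2 * β))) := by positivity
    rw [hsplit, pow_succ']
    linarith

lemma pow_le_norm_transfer_pow_left (hup : IsLup β Lup) (hdn : IsLdn Ldn) (ha : 0 ≤ a)
    (hb : 0 ≤ b) (n : ℕ) : a ^ n ≤ ‖((a : ℂ) • Lup + (b : ℂ) • Ldn) ^ n‖ := by
  have hcont : ContinuousAt (fun x : ℝ => a ^ n * (1 + n * x) ^ (-(2 * β))) 0 :=
    continuousAt_const.mul ((by fun_prop : ContinuousAt (fun x : ℝ => 1 + n * x) 0).rpow_const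
      (Or.inl (by simp)))
  have hlim : Filter.Tendsto (fun x : ℝ => a ^ n * (1 + n * x) ^ (-(2 * β)))
      (nhdsWithin 0 (Set.Ioi 0)) (nhds (a ^ n)) := by
    simpa using (hcont.continuousWithinAt (s := Set.Ioi 0)).tendsto
  exact le_of_tendsto hlim (eventually_nhdsWithin_of_forall fun x hx =>
    (isMinorant_transfer_pow_one_rpow hup hdn ha hb n).le_opNorm hx)

lemma pow_le_norm_transfer_pow_right (hup : IsLup β Lup) (hdn : IsLdn Ldn) (ha : 0 ≤ a)
    (hb : 0 ≤ b) (n : ℕ) : b ^ n ≤ ‖((a : ℂ) • Lup + (b : ℂ) • Ldn) ^ n‖ :=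
  (isMinorant_transfer_pow_one_const hup hdn ha hb n).le_opNorm one_pos

lemma max_pow_le_norm_transfer_pow (hup : IsLup β Lup) (hdn : IsLdn Ldn) (ha : 0 ≤ a)
    (hb : 0 ≤ b) (n : ℕ) : max a b ^ n ≤ ‖((a : ℂ) • Lup + (b : ℂ) • Ldn) ^ n‖ := by
  rcases max_choice a b with hmax | hmax <;> rw [hmax]
  exacts [pow_le_norm_transfer_pow_left hup hdn ha hb n,
    pow_le_norm_transfer_pow_right hup hdn ha hb n]

end TransferOperator

theorem spectral_radius_lower_bound_general (β h : ℝ)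
    (Lup Ldn : ↥Hinf →L[ℂ] ↥Hinf) (hup : IsLup (β : ℂ) Lup) (hdn : IsLdn Ldn) :
    ENNReal.ofReal (Real.exp |β * h|)
      ≤ spectralRadius ℂ
          ((Real.exp (-(β * h)) : ℂ) • Lup + (Real.exp (β * h) : ℂ) • Ldn) := by
  have hexp : Real.exp |β * h| = max (Real.exp (-(β * h))) (Real.exp (β * h)) := by
    rw [abs_eq_max_neg, Real.exp_monotone.map_max, max_comm]
  rw [hexp]
  -- naming `A` spares the elaborator a costly unification of two ring structures on operators
  exact ofReal_le_spectralRadius_of_pow_le_norm_pow (A := Hinf →L[ℂ] Hinf) (by positivity)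
    (max_pow_le_norm_transfer_pow hup hdn (Real.exp_nonneg _) (Real.exp_nonneg _))

/-- (Proposition 6): for real `β ≥ 0` and `h ∈ ℝ`, the spectral radius
of `L_{β,h} = e^{-βh}L↑_β + e^{βh}L↓_β` on `H^∞(Π)` is at least `e^{|βh|}`. -/
theorem spectral_radius_lower_bound (β h : ℝ) (hβ : 0 ≤ β)
    (Lup Ldn : ↥Hinf →L[ℂ] ↥Hinf) (hup : IsLup (β : ℂ) Lup) (hdn : IsLdn Ldn) :
    ENNReal.ofReal (Real.exp |β * h|)
      ≤ spectralRadius ℂ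
          ((Real.exp (-(β * h)) : ℂ) • Lup + (Real.exp (β * h) : ℂ) • Ldn) :=
  spectral_radius_lower_bound_general β h Lup Ldn hup hdn
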